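/- arXiv:1112.1645 — 9 statements merged into one kernel-verified Lean document; each statement's English description precedes it below -/
import Mathlib

section
/- Fix an integer N ≥ 2, a real p with 0 < p < 1, q = 1 − p, and a strategy S. Then there exists exactly one function L : {0,…,N} → ℝ satisfying L(0) = 0, L(N) = 1, and L(i) = q·L(i − S(i)) + p·L(i + S(i)) for all 1 ≤ i ≤ N − 1. -/
/-!
Uniqueness is a maximum principle. Take a solution `D` of the system with boundary values `≤ 0`
and the largest point `i` of `[0, N]` where `D` attains its maximum `M`. If `i` were interior,
`D i = q D(i - S i) + p D(i + S i)` with `p > 0` and both values `≤ M` would force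
`D (i + S i) = M` with `i + S i > i`; so `M` is a boundary value and `D ≤ 0`.

Existence then comes for free: restricted to functions on `{0, …, N}`, the system is a square
linear system, and an injective endomorphism of a finite-dimensional space is surjective.
-/

namespace Casino

def IsStrategy (N : ℕ) (S : ℕ → ℕ) : Prop :=
  ∀ i : ℕ, 1 ≤ i → i ≤ N - 1 → 1 ≤ S i ∧ S i ≤ min i (N - i)

/-- `L` is harmonic for the chain that moves from `i` to `i + S i` with probability `p` and to
`i - S i` with probability `q`; this is the win-probability system without its boundary values. -/
def IsHarmonic (N : ℕ) (p q : ℝ) (S : ℕ → ℕ) (L : ℕ → ℝ) : Prop :=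
  ∀ i : ℕ, 1 ≤ i → i ≤ N - 1 → L i = q * L (i - S i) + p * L (i + S i)

section

variable {N : ℕ} {p q : ℝ} {S : ℕ → ℕ}

theorem isHarmonic_zero : IsHarmonic N p q S 0 := fun _ _ _ => by simp

theorem IsHarmonic.sub {L₁ L₂ : ℕ → ℝ} (h₁ : IsHarmonic N p q S L₁)
    (h₂ : IsHarmonic N p q S L₂) : IsHarmonic N p q S (L₁ - L₂) := fun i hi₁ hi₂ => by
  simp only [Pi.sub_apply, h₁ i hi₁ hi₂, h₂ i hi₁ hi₂]
  ring

theorem IsHarmonic.apply_add_eq_of_le {D : ℕ → ℝ} {M : ℝ} (hD : IsHarmonic N p q S D)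
    (hp : 0 < p) (hq : 0 ≤ q) (hpq : p + q = 1) (hS : IsStrategy N S)
    (hM : ∀ j ≤ N, D j ≤ M) {i : ℕ} (hi₁ : 1 ≤ i) (hi₂ : i ≤ N - 1)
    (hDi : D i = M) : D (i + S i) = M := by
  obtain ⟨-, hSi⟩ := hS i hi₁ hi₂
  have hright : D (i + S i) ≤ M := hM _ (by omega)
  have hleft : q * D (i - S i) ≤ q * M := mul_le_mul_of_nonneg_left (hM _ (by omega)) hq
  have hconvex : q * M + p * M = M := by linear_combination M * hpq
  have : p * M ≤ p * D (i + S i) := by linarith [hD i hi₁ hi₂]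
  exact le_antisymm hright (le_of_mul_le_mul_left this hp)

theorem IsHarmonic.nonpos_of_boundary_nonpos {D : ℕ → ℝ} (hD : IsHarmonic N p q S D)
    (hp : 0 < p) (hq : 0 ≤ q) (hpq : p + q = 1) (hS : IsStrategy N S)
    (h₀ : D 0 ≤ 0) (hN : D N ≤ 0) : ∀ i ≤ N, D i ≤ 0 := by
  have hne : (Finset.range (N + 1)).Nonempty := Finset.nonempty_range_add_one
  set M := (Finset.range (N + 1)).sup' hne D
  have hM : ∀ j ≤ N, D j ≤ M := fun j hj =>
    Finset.le_sup' D (Finset.mem_range_succ_iff.mpr hj)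
  set T := (Finset.range (N + 1)).filter (D · = M)
  have hTne : T.Nonempty := by
    obtain ⟨j, hj, hDj⟩ := Finset.exists_mem_eq_sup' hne D
    exact ⟨j, Finset.mem_filter.mpr ⟨hj, hDj.symm⟩⟩
  obtain ⟨hi_range, hDi⟩ := Finset.mem_filter.mp (T.max'_mem hTne)
  set i := T.max' hTne
  have hiN : i ≤ N := Finset.mem_range_succ_iff.mp hi_range
  have hboundary : i = 0 ∨ i = N := by
    by_contra! hint
    have hi₁ : 1 ≤ i := by omega
    have hi₂ : i ≤ N - 1 := by omega
    obtain ⟨hS₁, hS₂⟩ := hS i hi₁ hi₂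
    have hmem : i + S i ∈ T := Finset.mem_filter.mpr ⟨Finset.mem_range_succ_iff.mpr (by omega),
      hD.apply_add_eq_of_le hp hq hpq hS hM hi₁ hi₂ hDi⟩
    have := T.le_max' _ hmem
    omega
  have hM₀ : M ≤ 0 := by
    rcases hboundary with h | h <;> rw [← hDi, h] <;> assumption
  exact fun j hj => (hM j hj).trans hM₀

theorem IsHarmonic.eqOn_of_boundary {L₁ L₂ : ℕ → ℝ} (h₁ : IsHarmonic N p q S L₁)
    (h₂ : IsHarmonic N p q S L₂) (hp : 0 < p) (hq : 0 ≤ q) (hpq : p + q = 1)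
    (hS : IsStrategy N S) (h₀ : L₁ 0 = L₂ 0) (hN : L₁ N = L₂ N) :
    ∀ i ≤ N, L₁ i = L₂ i := by
  have hle : ∀ {L₁ L₂ : ℕ → ℝ}, IsHarmonic N p q S L₁ → IsHarmonic N p q S L₂ →
      L₁ 0 = L₂ 0 → L₁ N = L₂ N → ∀ i ≤ N, L₁ i ≤ L₂ i :=
    fun h₁ h₂ h₀ hN i hi => by
      simpa [sub_nonpos] using
        (h₁.sub h₂).nonpos_of_boundary_nonpos hp hq hpq hS (by simp [h₀]) (by simp [hN]) i hi
  exact fun i hi => le_antisymm (hle h₁ h₂ h₀ hN i hi) (hle h₂ h₁ h₀.symm hN.symm i hi)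

variable (N p q S) in
def residual : (ℕ → ℝ) →ₗ[ℝ] ℕ → ℝ where
  toFun L i := if 1 ≤ i ∧ i ≤ N - 1 then L i - (q * L (i - S i) + p * L (i + S i)) else L i
  map_add' L₁ L₂ := by
    funext i
    simp only [Pi.add_apply]
    split_ifs <;> ring
  map_smul' c L := by
    funext i
    simp only [Pi.smul_apply, smul_eq_mul, RingHom.id_apply]
    split_ifs <;> ring

theorem residual_apply_zero (L : ℕ → ℝ) : residual N p q S L 0 = L 0 := by
  simp [residual]

theorem residual_apply_self (L : ℕ → ℝ) : residual N p q S L N = L N := by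
  simp only [residual, LinearMap.coe_mk, AddHom.coe_mk]
  rw [if_neg (by omega)]

theorem isHarmonic_of_residual_eq_zero {L : ℕ → ℝ}
    (h : ∀ i, 1 ≤ i → i ≤ N - 1 → residual N p q S L i = 0) : IsHarmonic N p q S L :=
  fun i hi₁ hi₂ => by
    have := h i hi₁ hi₂
    rw [residual, LinearMap.coe_mk, AddHom.coe_mk, if_pos ⟨hi₁, hi₂⟩] at this
    linarith

theorem exists_isHarmonic (hN : N ≠ 0) (hp : 0 < p) (hq : 0 ≤ q) (hpq : p + q = 1)
    (hS : IsStrategy N S) (a b : ℝ) : ∃ L, IsHarmonic N p q S L ∧ L 0 = a ∧ L N = b := by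
  let extend := Function.ExtendByZero.linearMap ℝ (Fin.val : Fin (N + 1) → ℕ)
  have extend_apply (L : Fin (N + 1) → ℝ) (j : Fin (N + 1)) : extend L j = L j :=
    Fin.val_injective.extend_apply L 0 j
  let Φ := LinearMap.funLeft ℝ ℝ (Fin.val : Fin (N + 1) → ℕ) ∘ₗ residual N p q S ∘ₗ
    extend
  have hΦ (L g : Fin (N + 1) → ℝ) (hL : Φ L = g) {i : ℕ} (hi : i ≤ N) :
      residual N p q S (extend L) i = g ⟨i, by omega⟩ :=
    congrFun hL ⟨i, by omega⟩
  have hinj : Function.Injective Φ := by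
    rw [← LinearMap.ker_eq_bot, LinearMap.ker_eq_bot']
    intro L hL
    have hres (i : ℕ) (hi : i ≤ N) := hΦ L 0 hL hi
    have hharm : IsHarmonic N p q S (extend L) :=
      isHarmonic_of_residual_eq_zero fun i _ hi => hres i (by omega)
    have hzero := hharm.eqOn_of_boundary isHarmonic_zero hp hq hpq hS
      ((residual_apply_zero _).symm.trans (hres 0 (by omega)))
      ((residual_apply_self _).symm.trans (hres N le_rfl))
    funext j
    rw [← extend_apply L j]
    exact hzero j j.is_le
  obtain ⟨L, hL⟩ := LinearMap.injective_iff_surjective.mp hinj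
    fun j => if (j : ℕ) = 0 then a else if (j : ℕ) = N then b else 0
  refine ⟨extend L, isHarmonic_of_residual_eq_zero fun i hi₁ hi₂ => ?_, ?_, ?_⟩
  · exact (hΦ L _ hL (by omega)).trans
      ((if_neg (show i ≠ 0 by omega)).trans (if_neg (show i ≠ N by omega)))
  · exact (residual_apply_zero _).symm.trans (hΦ L _ hL (by omega))
  · exact (residual_apply_self _).symm.trans ((hΦ L _ hL le_rfl).trans (by simp [hN]))

end

end Casino

/-- Existence and uniqueness of the solution of the win-probability system
for a stationary strategy `S`: `L 0 = 0`, `L N = 1`,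
`L i = q·L(i - S i) + p·L(i + S i)` for `1 ≤ i ≤ N - 1`. -/
theorem win_prob_system_exists_unique
    (N : ℕ) (hN : 2 ≤ N) (p q : ℝ)
    (hp0 : 0 < p) (hp1 : p < 1) (hq : q = 1 - p)
    (S : ℕ → ℕ)
    (hS : ∀ i : ℕ, 1 ≤ i → i ≤ N - 1 → 1 ≤ S i ∧ S i ≤ min i (N - i)) :
    (∃ L : ℕ → ℝ, L 0 = 0 ∧ L N = 1 ∧
        ∀ i : ℕ, 1 ≤ i → i ≤ N - 1 →
          L i = q * L (i - S i) + p * L (i + S i)) ∧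
    (∀ L₁ L₂ : ℕ → ℝ,
        (L₁ 0 = 0 ∧ L₁ N = 1 ∧
          ∀ i : ℕ, 1 ≤ i → i ≤ N - 1 →
            L₁ i = q * L₁ (i - S i) + p * L₁ (i + S i)) →
        (L₂ 0 = 0 ∧ L₂ N = 1 ∧
          ∀ i : ℕ, 1 ≤ i → i ≤ N - 1 →
            L₂ i = q * L₂ (i - S i) + p * L₂ (i + S i)) →
        ∀ i : ℕ, i ≤ N → L₁ i = L₂ i) := by
  have hq0 : 0 ≤ q := by linarith
  have hpq : p + q = 1 := by linarith
  refine ⟨?_, ?_⟩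
  · obtain ⟨L, hL, hL₀, hLN⟩ := Casino.exists_isHarmonic (by omega) hp0 hq0 hpq hS 0 1
    exact ⟨L, hL₀, hLN, hL⟩
  · rintro L₁ L₂ ⟨h₁₀, h₁N, h₁⟩ ⟨h₂₀, h₂N, h₂⟩
    exact Casino.IsHarmonic.eqOn_of_boundary h₁ h₂ hp0 hq0 hpq hS (h₁₀.trans h₂₀.symm)
      (h₁N.trans h₂N.symm)
end

section
/- Fix an integer N ≥ 2, a real p with 0 < p < 1, q = 1 − p, and a strategy S. Then there exists exactly one function L : {0,…,N} → ℝ satisfying L(0) = 0, L(N) = 0, and L(i) = q·L(i − S(i)) + p·L(i + S(i)) + 1 for all 1 ≤ i ≤ N − 1. -/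
/-!
Maximum principle: let `D` solve the system with a nonpositive source term and suppose its maximum
over `{0, …, N}` is positive. A maximiser `m` with the largest index is then not a boundary state,
and it cannot be interior either: there `D (m + S m) < D m` and `D (m - S m) ≤ D m`, so `p > 0`
puts the weighted average `q D (m - S m) + p D (m + S m)` strictly below `D m`. Applied to
`±(L₁ - L₂)` this gives uniqueness; existence follows because the system is a square linear system
on `{0, …, N}`, and an injective endomorphism of a finite-dimensional space is surjective.
-/

open Function

section DurationSystem

variable {N : ℕ} {p q : ℝ} {S : ℕ → ℕ}

def SolvesDurationSystem (N : ℕ) (p q : ℝ) (S : ℕ → ℕ) (c : ℝ) (L : ℕ → ℝ) : Prop :=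
  L 0 = 0 ∧ L N = 0 ∧
    ∀ i : ℕ, 1 ≤ i → i ≤ N - 1 → L i = q * L (i - S i) + p * L (i + S i) + c

theorem SolvesDurationSystem.sub {c₁ c₂ : ℝ} {L₁ L₂ : ℕ → ℝ}
    (h₁ : SolvesDurationSystem N p q S c₁ L₁) (h₂ : SolvesDurationSystem N p q S c₂ L₂) :
    SolvesDurationSystem N p q S (c₁ - c₂) (L₁ - L₂) := by
  refine ⟨by simp [h₁.1, h₂.1], by simp [h₁.2.1, h₂.2.1], fun i hi hi' => ?_⟩
  simp only [Pi.sub_apply]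
  rw [h₁.2.2 i hi hi', h₂.2.2 i hi hi']
  ring

theorem SolvesDurationSystem.neg {c : ℝ} {L : ℕ → ℝ} (h : SolvesDurationSystem N p q S c L) :
    SolvesDurationSystem N p q S (-c) (-L) := by
  refine ⟨by simp [h.1], by simp [h.2.1], fun i hi hi' => ?_⟩
  simp only [Pi.neg_apply]
  rw [h.2.2 i hi hi']
  ring

theorem SolvesDurationSystem.le_zero {c : ℝ} {D : ℕ → ℝ} (h : SolvesDurationSystem N p q S c D)
    (hc : c ≤ 0) (hp : 0 < p) (hq : 0 ≤ q) (hpq : q + p = 1)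
    (hS : ∀ i : ℕ, 1 ≤ i → i ≤ N - 1 → 1 ≤ S i ∧ i + S i ≤ N) :
    ∀ i ≤ N, D i ≤ 0 := by
  obtain ⟨m, hmem, hmax⟩ :=
    (Finset.range (N + 1)).exists_max_image (fun i => toLex (D i, i)) ⟨0, by simp⟩
  have hm : m ≤ N := Nat.lt_succ_iff.mp (Finset.mem_range.mp hmem)
  have hcmp : ∀ j ≤ N, D j < D m ∨ D j = D m ∧ j ≤ m := fun j hj =>
    Prod.Lex.toLex_le_toLex.mp (hmax j (Finset.mem_range.mpr (Nat.lt_succ_of_le hj)))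
  have hle : ∀ j ≤ N, D j ≤ D m := fun j hj => (hcmp j hj).elim le_of_lt fun h => h.1.le
  suffices D m ≤ 0 from fun i hi => (hle i hi).trans this
  by_contra! hpos
  have h1 : 1 ≤ m := Nat.one_le_iff_ne_zero.mpr fun h0 => by simp [h0, h.1] at hpos
  have h2 : m ≤ N - 1 := by
    have : m ≠ N := fun hN => by simp [hN, h.2.1] at hpos
    omega
  obtain ⟨hS1, hSN⟩ := hS m h1 h2
  have hright : D (m + S m) < D m := by
    rcases hcmp _ hSN with hlt | ⟨-, hidx⟩
    · exact hlt
    · omega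
  have hleft : q * D (m - S m) ≤ q * D m := mul_le_mul_of_nonneg_left (hle _ (by omega)) hq
  have hright' : p * D (m + S m) < p * D m := mul_lt_mul_of_pos_left hright hp
  have havg : q * D m + p * D m = D m := by rw [← add_mul, hpq, one_mul]
  linarith [h.2.2 m h1 h2]

theorem SolvesDurationSystem.eq_zero {D : ℕ → ℝ} (h : SolvesDurationSystem N p q S 0 D)
    (hp : 0 < p) (hq : 0 ≤ q) (hpq : q + p = 1)
    (hS : ∀ i : ℕ, 1 ≤ i → i ≤ N - 1 → 1 ≤ S i ∧ i + S i ≤ N) :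
    ∀ i ≤ N, D i = 0 := fun i hi =>
  le_antisymm (h.le_zero le_rfl hp hq hpq hS i hi)
    (neg_nonpos.mp (h.neg.le_zero neg_zero.le hp hq hpq hS i hi))

theorem SolvesDurationSystem.eq_of_solves {c : ℝ} {L₁ L₂ : ℕ → ℝ}
    (h₁ : SolvesDurationSystem N p q S c L₁) (h₂ : SolvesDurationSystem N p q S c L₂)
    (hp : 0 < p) (hq : 0 ≤ q) (hpq : q + p = 1)
    (hS : ∀ i : ℕ, 1 ≤ i → i ≤ N - 1 → 1 ≤ S i ∧ i + S i ≤ N) :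
    ∀ i ≤ N, L₁ i = L₂ i := fun i hi =>
  sub_eq_zero.mp ((sub_self c ▸ h₁.sub h₂).eq_zero hp hq hpq hS i hi)

def durationResidual (N : ℕ) (p q : ℝ) (S : ℕ → ℕ) : (ℕ → ℝ) →ₗ[ℝ] (ℕ → ℝ) where
  toFun L i := if 1 ≤ i ∧ i ≤ N - 1 then L i - q * L (i - S i) - p * L (i + S i) else L i
  map_add' L₁ L₂ := by
    funext i
    simp only [Pi.add_apply]
    split_ifs <;> ring
  map_smul' a L := by
    funext i
    simp only [Pi.smul_apply, smul_eq_mul, RingHom.id_apply]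
    split_ifs <;> ring

theorem solvesDurationSystem_of_residual_eq {c : ℝ} {L : ℕ → ℝ}
    (h : LinearMap.funLeft ℝ ℝ (Fin.val : Fin (N + 1) → ℕ) (durationResidual N p q S L) =
      fun j : Fin (N + 1) => if 1 ≤ (j : ℕ) ∧ (j : ℕ) ≤ N - 1 then c else 0) :
    SolvesDurationSystem N p q S c L := by
  have hres : ∀ i ≤ N, durationResidual N p q S L i = if 1 ≤ i ∧ i ≤ N - 1 then c else 0 :=
    fun i hi => congrFun h ⟨i, Nat.lt_succ_of_le hi⟩
  refine ⟨by simpa [durationResidual] using hres 0 (Nat.zero_le N), ?_, fun i hi hi' => ?_⟩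
  · have hN : ¬(1 ≤ N ∧ N ≤ N - 1) := by omega
    simpa [durationResidual, hN] using hres N le_rfl
  · have := hres i (by omega)
    simp only [durationResidual, LinearMap.coe_mk, AddHom.coe_mk, hi, hi', and_self,
      if_true] at this
    linarith

theorem exists_solvesDurationSystem (hp : 0 < p) (hq : 0 ≤ q) (hpq : q + p = 1)
    (hS : ∀ i : ℕ, 1 ≤ i → i ≤ N - 1 → 1 ≤ S i ∧ i + S i ≤ N) (c : ℝ) :
    ∃ L : ℕ → ℝ, SolvesDurationSystem N p q S c L := by
  let extend : (Fin (N + 1) → ℝ) →ₗ[ℝ] (ℕ → ℝ) := ExtendByZero.linearMap ℝ Fin.val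
  let T : (Fin (N + 1) → ℝ) →ₗ[ℝ] (Fin (N + 1) → ℝ) :=
    LinearMap.funLeft ℝ ℝ Fin.val ∘ₗ durationResidual N p q S ∘ₗ extend
  have hinj : Injective T := by
    rw [← LinearMap.ker_eq_bot, LinearMap.ker_eq_bot']
    intro v hv
    have hsol : SolvesDurationSystem N p q S 0 (extend v) :=
      solvesDurationSystem_of_residual_eq (hv.trans (funext fun _ => (ite_self 0).symm))
    funext j
    have hext : extend v j = v j := Fin.val_injective.extend_apply v 0 j
    rw [← hext]
    exact hsol.eq_zero hp hq hpq hS j (Nat.lt_succ_iff.mp j.isLt)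
  obtain ⟨v, hv⟩ := LinearMap.injective_iff_surjective.mp hinj
    fun j : Fin (N + 1) => if 1 ≤ (j : ℕ) ∧ (j : ℕ) ≤ N - 1 then c else 0
  exact ⟨extend v, solvesDurationSystem_of_residual_eq hv⟩

end DurationSystem

theorem expected_duration_system_exists_unique_general
    (N : ℕ) (p q : ℝ)
    (hp0 : 0 < p) (hp1 : p < 1) (hq : q = 1 - p)
    (S : ℕ → ℕ)
    (hS : ∀ i : ℕ, 1 ≤ i → i ≤ N - 1 → 1 ≤ S i ∧ S i ≤ min i (N - i)) :
    (∃ L : ℕ → ℝ, L 0 = 0 ∧ L N = 0 ∧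
        ∀ i : ℕ, 1 ≤ i → i ≤ N - 1 →
          L i = q * L (i - S i) + p * L (i + S i) + 1) ∧
    (∀ L₁ L₂ : ℕ → ℝ,
        (L₁ 0 = 0 ∧ L₁ N = 0 ∧
          ∀ i : ℕ, 1 ≤ i → i ≤ N - 1 →
            L₁ i = q * L₁ (i - S i) + p * L₁ (i + S i) + 1) →
        (L₂ 0 = 0 ∧ L₂ N = 0 ∧
          ∀ i : ℕ, 1 ≤ i → i ≤ N - 1 →
            L₂ i = q * L₂ (i - S i) + p * L₂ (i + S i) + 1) →
        ∀ i : ℕ, i ≤ N → L₁ i = L₂ i) := by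
  have hq0 : 0 ≤ q := by linarith
  have hpq : q + p = 1 := by linarith
  have hS' : ∀ i : ℕ, 1 ≤ i → i ≤ N - 1 → 1 ≤ S i ∧ i + S i ≤ N := fun i hi hi' => by
    have := hS i hi hi'
    omega
  exact ⟨exists_solvesDurationSystem hp0 hq0 hpq hS' 1,
    fun L₁ L₂ h₁ h₂ => SolvesDurationSystem.eq_of_solves h₁ h₂ hp0 hq0 hpq hS'⟩

/-- Existence and uniqueness of the solution of the expected-duration system
for a stationary strategy `S`: `L 0 = 0`, `L N = 0`,
`L i = q·L(i - S i) + p·L(i + S i) + 1` with `L N = 0` for `1 ≤ i ≤ N - 1`. -/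
theorem expected_duration_system_exists_unique
    (N : ℕ) (hN : 2 ≤ N) (p q : ℝ)
    (hp0 : 0 < p) (hp1 : p < 1) (hq : q = 1 - p)
    (S : ℕ → ℕ)
    (hS : ∀ i : ℕ, 1 ≤ i → i ≤ N - 1 → 1 ≤ S i ∧ S i ≤ min i (N - i)) :
    (∃ L : ℕ → ℝ, L 0 = 0 ∧ L N = 0 ∧
        ∀ i : ℕ, 1 ≤ i → i ≤ N - 1 →
          L i = q * L (i - S i) + p * L (i + S i) + 1) ∧
    (∀ L₁ L₂ : ℕ → ℝ,
        (L₁ 0 = 0 ∧ L₁ N = 0 ∧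
          ∀ i : ℕ, 1 ≤ i → i ≤ N - 1 →
            L₁ i = q * L₁ (i - S i) + p * L₁ (i + S i) + 1) →
        (L₂ 0 = 0 ∧ L₂ N = 0 ∧
          ∀ i : ℕ, 1 ≤ i → i ≤ N - 1 →
            L₂ i = q * L₂ (i - S i) + p * L₂ (i + S i) + 1) →
        ∀ i : ℕ, i ≤ N → L₁ i = L₂ i) :=
  expected_duration_system_exists_unique_general N p q hp0 hp1 hq S hS
end

section
/- Fix an integer N ≥ 2, a real p with 0 < p < 1, q = 1 − p, and a strategy S. If L : {0,…,N} → ℝ satisfies L(0) = 0, L(N) = 1, and L(i) = q·L(i − S(i)) + p·L(i + S(i)) for all 1 ≤ i ≤ N − 1, then 0 ≤ L(i) ≤ 1 for every 0 ≤ i ≤ N. -/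
/-! A least minimiser of `L` on `{0, …, N}` cannot be interior: there `L` is a weighted average,
with positive weight on a strictly smaller index, of two values that are at least the minimum, so
that smaller index is a minimiser too. Hence `L ≥ min (L 0) (L N)`, and applying this to `L` and
to `1 - L` traps the solution in `[0, 1]`. -/

theorem le_of_eq_weighted_avg {p q x y z : ℝ} (hp : 0 ≤ p) (hq : 0 < q) (hpq : q + p = 1)
    (hx : x = q * y + p * z) (hxz : x ≤ z) : y ≤ x := by
  have hsplit : q * x + p * x = x := by rw [← add_mul, hpq, one_mul]
  have : q * y ≤ q * x := by linarith [mul_le_mul_of_nonneg_left hxz hp]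
  exact le_of_mul_le_mul_left this hq

theorem nonneg_of_eq_weighted_avg_of_lt (N : ℕ) (p q : ℝ) (hp : 0 ≤ p) (hq : 0 < q)
    (hpq : q + p = 1) (a b : ℕ → ℕ) (ha : ∀ i, 0 < i → i < N → a i < i)
    (hb : ∀ i, 0 < i → i < N → b i ≤ N) (L : ℕ → ℝ) (h0 : 0 ≤ L 0) (hN : 0 ≤ L N)
    (hrec : ∀ i, 0 < i → i < N → L i = q * L (a i) + p * L (b i)) :
    ∀ i ≤ N, 0 ≤ L i := by
  classical
  have hex : ∃ k, k ≤ N ∧ ∀ j ≤ N, L k ≤ L j := by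
    obtain ⟨k, hk, hmin⟩ := Finset.exists_min_image (Finset.range (N + 1)) L ⟨0, by simp⟩
    exact ⟨k, Finset.mem_range_succ_iff.mp hk,
      fun j hj => hmin j (Finset.mem_range_succ_iff.mpr hj)⟩
  obtain ⟨hkN, hkmin⟩ := Nat.find_spec hex
  set k := Nat.find hex
  have hk_boundary : k = 0 ∨ k = N := by
    by_contra! hint
    have hk0 : 0 < k := Nat.pos_of_ne_zero hint.1
    have hkN' : k < N := lt_of_le_of_ne hkN hint.2
    have hak : a k < k := ha k hk0 hkN'
    have hb_ge : L k ≤ L (b k) := hkmin _ (hb k hk0 hkN')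
    have ha_le : L (a k) ≤ L k := le_of_eq_weighted_avg hp hq hpq (hrec k hk0 hkN') hb_ge
    exact Nat.find_min hex hak
      ⟨hak.le.trans hkN, fun j hj => ha_le.trans (hkmin j hj)⟩
  have hk_nonneg : 0 ≤ L k := by
    rcases hk_boundary with h | h <;> rw [h] <;> assumption
  exact fun i hi => hk_nonneg.trans (hkmin i hi)

theorem win_prob_system_between_zero_and_one_general
    (N : ℕ) (p q : ℝ)
    (hp0 : 0 < p) (hp1 : p < 1) (hq : q = 1 - p)
    (S : ℕ → ℕ)
    (hS : ∀ i : ℕ, 1 ≤ i → i ≤ N - 1 → 1 ≤ S i ∧ S i ≤ min i (N - i))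
    (L : ℕ → ℝ) (h0 : L 0 = 0) (hNval : L N = 1)
    (hrec : ∀ i : ℕ, 1 ≤ i → i ≤ N - 1 →
      L i = q * L (i - S i) + p * L (i + S i)) :
    ∀ i : ℕ, i ≤ N → 0 ≤ L i ∧ L i ≤ 1 := by
  have hq0 : 0 < q := by linarith
  have hpq : q + p = 1 := by linarith
  have hS' : ∀ i, 0 < i → i < N → 1 ≤ S i ∧ S i ≤ min i (N - i) :=
    fun i hi hiN => hS i hi (by omega)
  have hdown : ∀ i, 0 < i → i < N → i - S i < i := fun i hi hiN => by
    have := hS' i hi hiN; omega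
  have hup : ∀ i, 0 < i → i < N → i + S i ≤ N := fun i hi hiN => by
    have := (hS' i hi hiN).2.trans (min_le_right _ _); omega
  have hrec' : ∀ i, 0 < i → i < N → L i = q * L (i - S i) + p * L (i + S i) :=
    fun i hi hiN => hrec i hi (by omega)
  intro i hi
  refine ⟨nonneg_of_eq_weighted_avg_of_lt N p q hp0.le hq0 hpq _ _ hdown hup L
      (by rw [h0]) (by rw [hNval]; norm_num) hrec' i hi, ?_⟩
  have := nonneg_of_eq_weighted_avg_of_lt N p q hp0.le hq0 hpq _ _ hdown hup (fun j => 1 - L j)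
    (by simp [h0]) (by simp [hNval])
    (fun j hj hjN => by simp only [hrec' j hj hjN]; linear_combination -hpq) i hi
  linarith

/-- Any solution of the win-probability system for a stationary strategy `S`
takes values in `[0,1]`. -/
theorem win_prob_system_between_zero_and_one
    (N : ℕ) (hN : 2 ≤ N) (p q : ℝ)
    (hp0 : 0 < p) (hp1 : p < 1) (hq : q = 1 - p)
    (S : ℕ → ℕ)
    (hS : ∀ i : ℕ, 1 ≤ i → i ≤ N - 1 → 1 ≤ S i ∧ S i ≤ min i (N - i))
    (L : ℕ → ℝ) (h0 : L 0 = 0) (hNval : L N = 1)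
    (hrec : ∀ i : ℕ, 1 ≤ i → i ≤ N - 1 →
      L i = q * L (i - S i) + p * L (i + S i)) :
    ∀ i : ℕ, i ≤ N → 0 ≤ L i ∧ L i ≤ 1 :=
  win_prob_system_between_zero_and_one_general N p q hp0 hp1 hq S hS L h0 hNval hrec
end

section
/- Fix an integer N ≥ 2, a real p with 0 < p < 1, q = 1 − p, and a strategy S. If L : {0,…,N} → ℝ satisfies L(0) = 0, L(N) = 0, and L(i) = q·L(i − S(i)) + p·L(i + S(i)) + 1 for all 1 ≤ i ≤ N − 1, then L(i) ≥ 0 for every 0 ≤ i ≤ N, and moreover L(i) ≥ 1 for every 1 ≤ i ≤ N − 1. -/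
/-! Minimum principle: at an interior minimiser `m` of `L` the supersolution inequality would give
`L m ≥ q L(m - S m) + p L(m + S m) + 1 ≥ L m + 1`, since both neighbours stay in `{0,…,N}`.
So the minimum is attained on the boundary, where `L ≥ 0`; feeding `L ≥ 0` back into the
equation gives `L ≥ 1` in the interior. -/

section ExpectedDuration

variable {N : ℕ} {p q : ℝ} {S : ℕ → ℕ} {L : ℕ → ℝ}

theorem nonneg_of_duration_supersolution (hp : 0 ≤ p) (hq : 0 ≤ q) (hpq : q + p = 1)
    (hS : ∀ i, 1 ≤ i → i ≤ N - 1 → S i ≤ min i (N - i)) (h0 : 0 ≤ L 0) (hN : 0 ≤ L N)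
    (hsup : ∀ i, 1 ≤ i → i ≤ N - 1 → q * L (i - S i) + p * L (i + S i) + 1 ≤ L i) :
    ∀ i ≤ N, 0 ≤ L i := by
  obtain ⟨m, hm, hmin⟩ :=
    Finset.exists_min_image (Finset.range (N + 1)) L ⟨0, Finset.mem_range.mpr N.succ_pos⟩
  replace hm : m ≤ N := Nat.lt_succ_iff.mp (Finset.mem_range.mp hm)
  replace hmin : ∀ j ≤ N, L m ≤ L j := fun j hj => hmin j (Finset.mem_range.mpr (by omega))
  suffices 0 ≤ L m from fun i hi => this.trans (hmin i hi)
  rcases Nat.eq_zero_or_pos m with rfl | hm1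
  · exact h0
  rcases eq_or_lt_of_le hm with rfl | hmN
  · exact hN
  have hstep := hS m hm1 (by omega)
  have hleft := hmin (m - S m) (by omega)
  have hright := hmin (m + S m) (by omega)
  have hcomb : L m ≤ q * L (m - S m) + p * L (m + S m) :=
    calc L m = q * L m + p * L m := by rw [← add_mul, hpq, one_mul]
      _ ≤ q * L (m - S m) + p * L (m + S m) := by gcongr
  linarith [hsup m hm1 (by omega)]

theorem one_le_of_duration_supersolution (hp : 0 ≤ p) (hq : 0 ≤ q)
    (hS : ∀ i, 1 ≤ i → i ≤ N - 1 → S i ≤ min i (N - i)) (hL : ∀ i ≤ N, 0 ≤ L i)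
    (hsup : ∀ i, 1 ≤ i → i ≤ N - 1 → q * L (i - S i) + p * L (i + S i) + 1 ≤ L i)
    {i : ℕ} (hi1 : 1 ≤ i) (hiN : i ≤ N - 1) : 1 ≤ L i := by
  have hstep := hS i hi1 hiN
  have hleft := mul_nonneg hq (hL (i - S i) (by omega))
  have hright := mul_nonneg hp (hL (i + S i) (by omega))
  linarith [hsup i hi1 hiN]

end ExpectedDuration

theorem expected_duration_system_nonneg_general
    (N : ℕ) (p q : ℝ)
    (hp0 : 0 < p) (hp1 : p < 1) (hq : q = 1 - p)
    (S : ℕ → ℕ)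
    (hS : ∀ i : ℕ, 1 ≤ i → i ≤ N - 1 → 1 ≤ S i ∧ S i ≤ min i (N - i))
    (L : ℕ → ℝ) (h0 : L 0 = 0) (hNval : L N = 0)
    (hrec : ∀ i : ℕ, 1 ≤ i → i ≤ N - 1 →
      L i = q * L (i - S i) + p * L (i + S i) + 1) :
    (∀ i : ℕ, i ≤ N → 0 ≤ L i) ∧
    (∀ i : ℕ, 1 ≤ i → i ≤ N - 1 → 1 ≤ L i) := by
  have hq0 : 0 ≤ q := by linarith
  have hS' : ∀ i, 1 ≤ i → i ≤ N - 1 → S i ≤ min i (N - i) := fun i h1 h2 => (hS i h1 h2).2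
  have hsup : ∀ i, 1 ≤ i → i ≤ N - 1 → q * L (i - S i) + p * L (i + S i) + 1 ≤ L i :=
    fun i h1 h2 => (hrec i h1 h2).ge
  have hL := nonneg_of_duration_supersolution hp0.le hq0 (by linarith) hS' h0.ge hNval.ge hsup
  exact ⟨hL, fun i => one_le_of_duration_supersolution hp0.le hq0 hS' hL hsup⟩

/-- Any solution of the expected-duration system for a stationary strategy `S`
is nonnegative on `{0,…,N}`, and is `≥ 1` on the interior states `1 ≤ i ≤ N-1`. -/
theorem expected_duration_system_nonneg
    (N : ℕ) (hN : 2 ≤ N) (p q : ℝ)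
    (hp0 : 0 < p) (hp1 : p < 1) (hq : q = 1 - p)
    (S : ℕ → ℕ)
    (hS : ∀ i : ℕ, 1 ≤ i → i ≤ N - 1 → 1 ≤ S i ∧ S i ≤ min i (N - i))
    (L : ℕ → ℝ) (h0 : L 0 = 0) (hNval : L N = 0)
    (hrec : ∀ i : ℕ, 1 ≤ i → i ≤ N - 1 →
      L i = q * L (i - S i) + p * L (i + S i) + 1) :
    (∀ i : ℕ, i ≤ N → 0 ≤ L i) ∧
    (∀ i : ℕ, 1 ≤ i → i ≤ N - 1 → 1 ≤ L i) :=
  expected_duration_system_nonneg_general N p q hp0 hp1 hq S hS L h0 hNval hrec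
end

section
/- Let p be a real number with 0 < p < 1 and set q = 1 − p. Then for every integer s ≥ 1, q·(p/q)^s + p·(q/p)^s ≥ 1, with equality when s = 1. -/
/-! With `a = p / q`, the excess of `q a^(n+1) + p a^-(n+1)` over its value `p + q` at `n = 1`
factors as `q (a^n - 1)(a^(n+1) - 1) / a^n`, and powers of a positive `a` lie on the same side
of `1` as `a` does. -/

lemma pow_sub_one_mul_pow_sub_one_nonneg {a : ℝ} (ha : 0 ≤ a) (m n : ℕ) :
    0 ≤ (a ^ m - 1) * (a ^ n - 1) := by
  rcases le_total 1 a with h | h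
  · exact mul_nonneg (sub_nonneg.2 (one_le_pow₀ h)) (sub_nonneg.2 (one_le_pow₀ h))
  · exact mul_nonneg_of_nonpos_of_nonpos (sub_nonpos.2 (pow_le_one₀ ha h))
      (sub_nonpos.2 (pow_le_one₀ ha h))

lemma mul_div_pow_add_mul_div_pow_succ_sub {p q : ℝ} (hp : p ≠ 0) (hq : q ≠ 0) (n : ℕ) :
    q * (p / q) ^ (n + 1) + p * (q / p) ^ (n + 1) - (p + q) =
      q * ((p / q) ^ n - 1) * ((p / q) ^ (n + 1) - 1) / (p / q) ^ n := by
  have hp' : p = q * (p / q) := by field_simp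
  rw [← inv_div p q, inv_pow]
  generalize p / q = a at hp' ⊢
  subst hp'
  have ha : a ≠ 0 := right_ne_zero_of_mul hp
  field_simp
  ring

lemma add_le_mul_div_pow_add_mul_div_pow {p q : ℝ} (hp : 0 < p) (hq : 0 < q) (n : ℕ) :
    p + q ≤ q * (p / q) ^ n + p * (q / p) ^ n := by
  cases n with
  | zero => simp [add_comm]
  | succ n =>
    rw [← sub_nonneg, mul_div_pow_add_mul_div_pow_succ_sub hp.ne' hq.ne', mul_assoc]
    have ha : 0 ≤ p / q := by positivity
    exact div_nonneg (mul_nonneg hq.le (pow_sub_one_mul_pow_sub_one_nonneg ha n (n + 1)))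
      (pow_nonneg ha n)

/-- Superharmonicity estimate behind the optimality of timid play:
for `0 < p < 1`, `q = 1 - p`, and every integer stake `s ≥ 1`,
`q·(p/q)^s + p·(q/p)^s ≥ 1`, with equality when `s = 1`. -/
theorem timid_superharmonic_inequality
    (p q : ℝ) (hp0 : 0 < p) (hp1 : p < 1) (hq : q = 1 - p) :
    (∀ s : ℕ, 1 ≤ s → 1 ≤ q * (p / q) ^ s + p * (q / p) ^ s) ∧
    q * (p / q) ^ 1 + p * (q / p) ^ 1 = 1 := by
  have hq0 : 0 < q := by linarith
  have hpq : p + q = 1 := by linarith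
  refine ⟨fun s _ => hpq ▸ add_le_mul_div_pow_add_mul_div_pow hp0 hq0 s, ?_⟩
  field_simp
  exact hpq
end

section
/- Fix an integer N ≥ 2 and a real p with 1/2 ≤ p < 1; set q = 1 − p. Let h : {0,…,N} → ℝ be the unique solution of the win-probability system for the timid strategy (S(i) = 1 for all i). Then for every strategy S and every solution L : {0,…,N} → ℝ of the win-probability system for S, one has L(i) ≤ h(i) for every 0 ≤ i ≤ N. -/
/-!
With `r = q / p ≤ 1`, the increments of the timid solution are `h (k + 1) - h k = r ^ k (h 1 - h 0)`,
positive because they sum to `h N - h 0 = 1`, and nonincreasing. Comparing the increments over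
`[i, i + s]` with those over `[i - s, i]` term by term gives `q h (i - s) + p h (i + s) ≤ h i` for
every stake `s`. Hence `L - h` is dominated by its step average under `S` and vanishes at `0` and
`N`; at the largest maximiser of `L - h` a step up would strictly lose, so the maximum is at the
boundary and `L ≤ h`.
-/

open Finset

def TimidRecurrence (N : ℕ) (p q : ℝ) (h : ℕ → ℝ) : Prop :=
  ∀ i : ℕ, 1 ≤ i → i ≤ N - 1 → h i = q * h (i - 1) + p * h (i + 1)

section MaximumPrinciple

variable {N : ℕ} {p q : ℝ} {D : ℕ → ℝ} {s : ℕ → ℕ}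

theorem le_zero_of_le_step_average (hp : 0 < p) (hq : 0 ≤ q) (hpq : p + q = 1)
    (h0 : D 0 ≤ 0) (hN : D N ≤ 0)
    (hs : ∀ i, 0 < i → i < N → 0 < s i ∧ i + s i ≤ N)
    (hD : ∀ i, 0 < i → i < N → D i ≤ q * D (i - s i) + p * D (i + s i)) :
    ∀ i ≤ N, D i ≤ 0 := by
  -- The lexicographic order on `(D i, i)` picks the largest maximiser of `D` on `[0, N]`.
  obtain ⟨m, hm, hmax⟩ :=
    (range (N + 1)).exists_max_image (fun i => toLex (D i, i)) ⟨0, by simp⟩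
  have hmN : m ≤ N := Nat.lt_succ_iff.mp (mem_range.mp hm)
  have hcmp : ∀ j ≤ N, D j < D m ∨ D j = D m ∧ j ≤ m := fun j hj =>
    Prod.Lex.toLex_le_toLex.mp (hmax j (mem_range.mpr (Nat.lt_succ_of_le hj)))
  have hle : ∀ j ≤ N, D j ≤ D m := fun j hj =>
    (hcmp j hj).elim le_of_lt fun heq => heq.1.le
  suffices D m ≤ 0 from fun i hi => (hle i hi).trans this
  rcases Nat.eq_zero_or_pos m with rfl | hm0
  · exact h0
  rcases hmN.eq_or_lt with rfl | hmN'
  · exact hN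
  exfalso
  obtain ⟨hs0, hsN⟩ := hs m hm0 hmN'
  have hup : D (m + s m) < D m := by
    rcases hcmp _ hsN with hlt | ⟨-, hle'⟩
    · exact hlt
    · omega
  have hdown : D (m - s m) ≤ D m := hle _ (by omega)
  have : q * D (m - s m) + p * D (m + s m) < D m :=
    calc q * D (m - s m) + p * D (m + s m) < q * D m + p * D m :=
          add_lt_add_of_le_of_lt (mul_le_mul_of_nonneg_left hdown hq)
            (mul_lt_mul_of_pos_left hup hp)
      _ = D m := by linear_combination D m * hpq
  exact (hD m hm0 hmN').not_gt this

end MaximumPrinciple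

section TimidPlay

variable {N : ℕ} {p q : ℝ} {h : ℕ → ℝ}

theorem TimidRecurrence.increment_succ (hrec : TimidRecurrence N p q h) (hpq : p + q = 1)
    {k : ℕ} (hk : k + 2 ≤ N) :
    p * (h (k + 2) - h (k + 1)) = q * (h (k + 1) - h k) := by
  have := hrec (k + 1) (by omega) (by omega)
  simp only [Nat.add_sub_cancel] at this
  linear_combination -this - h (k + 1) * hpq

theorem TimidRecurrence.increment_eq (hrec : TimidRecurrence N p q h) (hpq : p + q = 1)
    (hp : p ≠ 0) {k : ℕ} (hk : k + 1 ≤ N) :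
    h (k + 1) - h k = (q / p) ^ k * (h 1 - h 0) := by
  induction k with
  | zero => simp
  | succ k ih =>
    have hstep := hrec.increment_succ hpq hk
    rw [pow_succ, mul_comm _ (q / p), mul_assoc, ← ih (by omega), div_mul_eq_mul_div,
      eq_div_iff hp]
    linear_combination hstep

theorem TimidRecurrence.increment_zero_pos (hrec : TimidRecurrence N p q h) (hpq : p + q = 1)
    (hp : 0 < p) (hq : 0 ≤ q) (h0 : h 0 = 0) (hN : h N = 1) :
    0 < h 1 - h 0 := by
  have htel : h N - h 0 = (∑ k ∈ range N, (q / p) ^ k) * (h 1 - h 0) := by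
    rw [← sum_range_sub, sum_mul]
    exact sum_congr rfl fun k hk =>
      hrec.increment_eq hpq hp.ne' (Nat.succ_le_of_lt (mem_range.mp hk))
  refine pos_of_mul_pos_left (b := ∑ k ∈ range N, (q / p) ^ k) ?_ (by positivity)
  rw [mul_comm, ← htel, h0, hN]
  norm_num

theorem TimidRecurrence.increment_antitone (hrec : TimidRecurrence N p q h)
    (hpq : p + q = 1) (hp : 0 < p) (hq : 0 ≤ q) (hqp : q ≤ p) (h0 : h 0 = 0) (hN : h N = 1)
    {k l : ℕ} (hkl : k ≤ l) (hl : l + 1 ≤ N) :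
    h (l + 1) - h l ≤ h (k + 1) - h k := by
  rw [hrec.increment_eq hpq hp.ne' hl, hrec.increment_eq hpq hp.ne' (k := k) (by omega)]
  have hr : q / p ≤ 1 := (div_le_one hp).mpr hqp
  exact mul_le_mul_of_nonneg_right (pow_le_pow_of_le_one (by positivity) hr hkl)
    (hrec.increment_zero_pos hpq hp hq h0 hN).le

theorem TimidRecurrence.step_average_le (hrec : TimidRecurrence N p q h)
    (hpq : p + q = 1) (hp : 0 < p) (hq : 0 ≤ q) (hqp : q ≤ p) (h0 : h 0 = 0) (hN : h N = 1)
    {i s : ℕ} (hsi : s ≤ i) (hiN : i + s ≤ N) :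
    q * h (i - s) + p * h (i + s) ≤ h i := by
  obtain ⟨a, rfl⟩ : ∃ a, i = a + s := ⟨i - s, by omega⟩
  rw [Nat.add_sub_cancel]
  have hlow : h (a + s) - h a = ∑ j ∈ range s, (h (a + j + 1) - h (a + j)) :=
    (sum_range_sub (fun j => h (a + j)) s).symm
  have hhigh : h (a + s + s) - h (a + s) = ∑ j ∈ range s, (h (a + s + j + 1) - h (a + s + j)) :=
    (sum_range_sub (fun j => h (a + s + j)) s).symm
  -- Each upper increment is at most the one just above `a + j`, which the recurrence trades
  -- for `q / p` times the increment at `a + j`.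
  have hterm : ∀ j ∈ range s,
      p * (h (a + s + j + 1) - h (a + s + j)) ≤ q * (h (a + j + 1) - h (a + j)) := by
    intro j hj
    have hj' := mem_range.mp hj
    calc p * (h (a + s + j + 1) - h (a + s + j)) ≤ p * (h (a + j + 1 + 1) - h (a + j + 1)) :=
          mul_le_mul_of_nonneg_left
            (hrec.increment_antitone hpq hp hq hqp h0 hN (by omega) (by omega)) hp.le
      _ = q * (h (a + j + 1) - h (a + j)) := hrec.increment_succ hpq (by omega)
  have hsum := sum_le_sum hterm
  rw [← mul_sum, ← mul_sum, ← hlow, ← hhigh] at hsum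
  linear_combination hsum + h (a + s) * hpq

end TimidPlay

theorem timid_play_optimal_superfair_general
    (N : ℕ) (p q : ℝ)
    (hp0 : 1 / 2 ≤ p) (hp1 : p < 1) (hq : q = 1 - p)
    (h : ℕ → ℝ) (hh0 : h 0 = 0) (hhN : h N = 1)
    (hhrec : ∀ i : ℕ, 1 ≤ i → i ≤ N - 1 →
      h i = q * h (i - 1) + p * h (i + 1))
    (S : ℕ → ℕ)
    (hS : ∀ i : ℕ, 1 ≤ i → i ≤ N - 1 → 1 ≤ S i ∧ S i ≤ min i (N - i))
    (L : ℕ → ℝ) (hL0 : L 0 = 0) (hLN : L N = 1)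
    (hLrec : ∀ i : ℕ, 1 ≤ i → i ≤ N - 1 →
      L i = q * L (i - S i) + p * L (i + S i)) :
    ∀ i : ℕ, i ≤ N → L i ≤ h i := by
  have hpq : p + q = 1 := by rw [hq]; ring
  have hp : 0 < p := by linarith
  have hq0 : 0 ≤ q := by linarith
  have hqp : q ≤ p := by linarith
  have hstake : ∀ i, 0 < i → i < N → 1 ≤ S i ∧ S i ≤ i ∧ i + S i ≤ N := fun i hi hiN => by
    have := hS i hi (by omega)
    omega
  suffices ∀ i ≤ N, L i - h i ≤ 0 from fun i hi => sub_nonpos.mp (this i hi)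
  refine le_zero_of_le_step_average (s := S) hp hq0 hpq (by simp [hL0, hh0]) (by simp [hLN, hhN])
    (fun i hi hiN => ⟨(hstake i hi hiN).1, (hstake i hi hiN).2.2⟩) fun i hi hiN => ?_
  obtain ⟨hs1, hsi, hsN⟩ := hstake i hi hiN
  have hsuper := TimidRecurrence.step_average_le hhrec hpq hp hq0 hqp hh0 hhN hsi hsN
  have hLi := hLrec i hi (by omega)
  linear_combination hLi + hsuper

/-- Dubins–Savage optimality of timid play in a superfair casino
(`1/2 ≤ p < 1`), restricted to stationary strategies: if `h` solves the
win-probability system for the timid strategy (stake `1` everywhere) and `L`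
solves the win-probability system for any stationary strategy `S`, then
`L i ≤ h i` for all `0 ≤ i ≤ N`. -/
theorem timid_play_optimal_superfair
    (N : ℕ) (hN : 2 ≤ N) (p q : ℝ)
    (hp0 : 1 / 2 ≤ p) (hp1 : p < 1) (hq : q = 1 - p)
    (h : ℕ → ℝ) (hh0 : h 0 = 0) (hhN : h N = 1)
    (hhrec : ∀ i : ℕ, 1 ≤ i → i ≤ N - 1 →
      h i = q * h (i - 1) + p * h (i + 1))
    (S : ℕ → ℕ)
    (hS : ∀ i : ℕ, 1 ≤ i → i ≤ N - 1 → 1 ≤ S i ∧ S i ≤ min i (N - i))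
    (L : ℕ → ℝ) (hL0 : L 0 = 0) (hLN : L N = 1)
    (hLrec : ∀ i : ℕ, 1 ≤ i → i ≤ N - 1 →
      L i = q * L (i - S i) + p * L (i + S i)) :
    ∀ i : ℕ, i ≤ N → L i ≤ h i :=
  timid_play_optimal_superfair_general N p q hp0 hp1 hq h hh0 hhN hhrec S hS L hL0 hLN hLrec
end

section
/- Fix an integer N ≥ 2 and a real p with 0 < p ≤ 1/2; set q = 1 − p. Let Q : {0,…,N} → ℝ be the unique solution of the win-probability system for the bold strategy (S(i) = min(i, N − i) for all i). Then for every strategy S and every solution L : {0,…,N} → ℝ of the win-probability system for S, one has L(i) ≤ Q(i) for every 0 ≤ i ≤ N. -/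
lemma winsys_nonneg (N : ℕ) (hN : 1 ≤ N) (p q : ℝ)
    (hp0 : 0 < p) (hq0 : 0 < q) (hpq : p + q = 1)
    (L : ℕ → ℝ) (hL0 : L 0 = 0) (hLN : L N = 1)
    (Hrec : ∀ i, 1 ≤ i → i < N →
      ∃ s, 1 ≤ s ∧ s ≤ i ∧ i + s ≤ N ∧ L i = q * L (i - s) + p * L (i + s)) :
    ∀ i, i ≤ N → 0 ≤ L i := by
  classical
  by_contra hcon
  push_neg at hcon
  obtain ⟨j, hjN, hj⟩ := hcon
  have hsne : (Finset.range (N+1)).Nonempty := ⟨0, by simp⟩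
  set m := (Finset.range (N+1)).inf' hsne L with hm
  have hmle : ∀ i, i ≤ N → m ≤ L i := by
    intro i hi
    exact Finset.inf'_le _ (by simp; omega)
  have hmneg : m < 0 := lt_of_le_of_lt (hmle j hjN) hj
  set A := (Finset.range (N+1)).filter (fun i => L i ≤ m) with hA
  have hAne : A.Nonempty := by
    obtain ⟨i, hi, hie⟩ := Finset.exists_mem_eq_inf' hsne L
    exact ⟨i, by simp only [hA, Finset.mem_filter]; exact ⟨hi, le_of_eq hie.symm⟩⟩
  set i₀ := A.min' hAne with hi₀
  have hi₀A : i₀ ∈ A := A.min'_mem hAne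
  have hi₀N : i₀ ≤ N := by
    have := (Finset.mem_filter.mp hi₀A).1
    simp at this; omega
  have hi₀m : L i₀ ≤ m := (Finset.mem_filter.mp hi₀A).2
  have hne0 : i₀ ≠ 0 := by
    intro h0
    rw [h0, hL0] at hi₀m
    linarith
  have hneN : i₀ ≠ N := by
    intro h0
    rw [h0, hLN] at hi₀m
    linarith
  obtain ⟨s, hs1, hsle, hsN, hrec⟩ := Hrec i₀ (by omega) (by omega)
  have hlow : m ≤ L (i₀ - s) := hmle _ (by omega)
  have hhigh : m ≤ L (i₀ + s) := hmle _ (by omega)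
  have hlow' : L (i₀ - s) ≤ m := by
    by_contra h'
    push_neg at h'
    have h1 : q * m < q * L (i₀ - s) := by
      exact mul_lt_mul_of_pos_left h' hq0
    have h2 : p * m ≤ p * L (i₀ + s) := by
      exact mul_le_mul_of_nonneg_left hhigh hp0.le
    have : m < L i₀ := by
      rw [hrec]; nlinarith
    linarith
  have hmem : i₀ - s ∈ A := by
    simp only [hA, Finset.mem_filter, Finset.mem_range]
    exact ⟨by omega, hlow'⟩
  have := A.min'_le _ hmem
  omega

lemma winsys_le_one (N : ℕ) (hN : 1 ≤ N) (p q : ℝ)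
    (hp0 : 0 < p) (hq0 : 0 < q) (hpq : p + q = 1)
    (L : ℕ → ℝ) (hL0 : L 0 = 0) (hLN : L N = 1)
    (Hrec : ∀ i, 1 ≤ i → i < N →
      ∃ s, 1 ≤ s ∧ s ≤ i ∧ i + s ≤ N ∧ L i = q * L (i - s) + p * L (i + s)) :
    ∀ i, i ≤ N → L i ≤ 1 := by
  classical
  by_contra hcon
  push_neg at hcon
  obtain ⟨j, hjN, hj⟩ := hcon
  have hsne : (Finset.range (N+1)).Nonempty := ⟨0, by simp⟩
  set m := (Finset.range (N+1)).sup' hsne L with hm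
  have hmle : ∀ i, i ≤ N → L i ≤ m := by
    intro i hi
    exact Finset.le_sup' _ (by simp; omega)
  have hmpos : 1 < m := lt_of_lt_of_le hj (hmle j hjN)
  set A := (Finset.range (N+1)).filter (fun i => m ≤ L i) with hA
  have hAne : A.Nonempty := by
    obtain ⟨i, hi, hie⟩ := Finset.exists_mem_eq_sup' hsne L
    exact ⟨i, by simp only [hA, Finset.mem_filter]; exact ⟨hi, le_of_eq hie⟩⟩
  set i₀ := A.max' hAne with hi₀
  have hi₀A : i₀ ∈ A := A.max'_mem hAne
  have hi₀N : i₀ ≤ N := by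
    have := (Finset.mem_filter.mp hi₀A).1
    simp at this; omega
  have hi₀m : m ≤ L i₀ := (Finset.mem_filter.mp hi₀A).2
  have hne0 : i₀ ≠ 0 := by
    intro h0
    rw [h0, hL0] at hi₀m
    linarith
  have hneN : i₀ ≠ N := by
    intro h0
    rw [h0, hLN] at hi₀m
    linarith
  obtain ⟨s, hs1, hsle, hsN, hrec⟩ := Hrec i₀ (by omega) (by omega)
  have hlow : L (i₀ - s) ≤ m := hmle _ (by omega)
  have hhigh : L (i₀ + s) ≤ m := hmle _ (by omega)
  have hhigh' : m ≤ L (i₀ + s) := by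
    by_contra h'
    push_neg at h'
    have h1 : p * L (i₀ + s) < p * m := mul_lt_mul_of_pos_left h' hp0
    have h2 : q * L (i₀ - s) ≤ q * m := mul_le_mul_of_nonneg_left hlow hq0.le
    have : L i₀ < m := by
      rw [hrec]; nlinarith
    linarith
  have hmem : i₀ + s ∈ A := by
    simp only [hA, Finset.mem_filter, Finset.mem_range]
    exact ⟨by omega, hhigh'⟩
  have := A.le_max' _ hmem
  omega

set_option maxHeartbeats 1000000 in
/-- Dubins–Savage optimality of bold play in a subfair casino
(`0 < p ≤ 1/2`), restricted to stationary strategies: if `Q` solves the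
win-probability system for the bold strategy (stake `min i (N - i)`) and `L`
solves the win-probability system for any stationary strategy `S`, then
`L i ≤ Q i` for all `0 ≤ i ≤ N`. -/
theorem bold_play_optimal_subfair
    (N : ℕ) (hN : 2 ≤ N) (p q : ℝ)
    (hp0 : 0 < p) (hp1 : p ≤ 1 / 2) (hq : q = 1 - p)
    (Q : ℕ → ℝ) (hQ0 : Q 0 = 0) (hQN : Q N = 1)
    (hQrec : ∀ i : ℕ, 1 ≤ i → i ≤ N - 1 →
      Q i = q * Q (i - min i (N - i)) + p * Q (i + min i (N - i)))
    (S : ℕ → ℕ)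
    (hS : ∀ i : ℕ, 1 ≤ i → i ≤ N - 1 → 1 ≤ S i ∧ S i ≤ min i (N - i))
    (L : ℕ → ℝ) (hL0 : L 0 = 0) (hLN : L N = 1)
    (hLrec : ∀ i : ℕ, 1 ≤ i → i ≤ N - 1 →
      L i = q * L (i - S i) + p * L (i + S i)) :
    ∀ i : ℕ, i ≤ N → L i ≤ Q i := by
  classical
  have hq0 : 0 < q := by rw [hq]; linarith
  have hpq : p ≤ q := by rw [hq]; linarith
  have hpq1 : p + q = 1 := by rw [hq]; ring
  -- helpers for the bold system
  have Hlow : ∀ i, 2*i ≤ N → Q i = p * Q (2*i) := by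
    intro i h
    rcases Nat.eq_zero_or_pos i with h0 | h1
    · subst h0; simp [hQ0]
    · have hrec := hQrec i h1 (by omega)
      have hmin : min i (N - i) = i := min_eq_left (by omega)
      rw [hmin] at hrec
      have e1 : i - i = 0 := by omega
      have e2 : i + i = 2*i := by omega
      rw [e1, e2, hQ0] at hrec
      linarith
  have Hhigh : ∀ i, N ≤ 2*i → i ≤ N → Q i = q * Q (2*i - N) + p := by
    intro i h hiN
    rcases eq_or_lt_of_le hiN with h0 | h1
    · subst h0
      have e : 2*i - i = i := by omega
      rw [e, hQN]; linarith
    · have hrec := hQrec i (by omega) (by omega)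
      have hmin : min i (N - i) = N - i := min_eq_right (by omega)
      rw [hmin] at hrec
      have e1 : i - (N - i) = 2*i - N := by omega
      have e2 : i + (N - i) = N := by omega
      rw [e1, e2, hQN] at hrec
      linarith
  have HrecQ : ∀ i, 1 ≤ i → i < N →
      ∃ s, 1 ≤ s ∧ s ≤ i ∧ i + s ≤ N ∧ Q i = q * Q (i - s) + p * Q (i + s) := by
    intro i h1 h2
    exact ⟨min i (N - i), by omega, by omega, by omega, hQrec i h1 (by omega)⟩
  have Qnn : ∀ i, i ≤ N → 0 ≤ Q i :=
    winsys_nonneg N (by omega) p q hp0 hq0 hpq1 Q hQ0 hQN HrecQ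
  have Qle1 : ∀ i, i ≤ N → Q i ≤ 1 :=
    winsys_le_one N (by omega) p q hp0 hq0 hpq1 Q hQ0 hQN HrecQ
  -- unified superadditivity / supermodularity via a maximum principle
  have hne2 : ((Finset.range (N+1)) ×ˢ (Finset.range (N+1))).Nonempty := ⟨(0,0), by simp⟩
  set M := ((Finset.range (N+1)) ×ˢ (Finset.range (N+1))).sup' hne2
      (fun z : ℕ × ℕ => Q z.1 + Q z.2 -
        (if z.1 + z.2 ≤ N then Q (z.1 + z.2) else 1 + Q (z.1 + z.2 - N))) with hMdef
  have hub : ∀ U V, U ≤ N → V ≤ N →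
      Q U + Q V - (if U + V ≤ N then Q (U + V) else 1 + Q (U + V - N)) ≤ M := by
    intro U V hU hV
    have hmem : (U, V) ∈ (Finset.range (N+1)) ×ˢ (Finset.range (N+1)) := by
      simp [Finset.mem_product]; omega
    rw [hMdef]
    exact Finset.le_sup' (fun z : ℕ × ℕ => Q z.1 + Q z.2 -
        (if z.1 + z.2 ≤ N then Q (z.1 + z.2) else 1 + Q (z.1 + z.2 - N))) hmem
  have IB1 : ∀ A B, A + B ≤ N → Q A + Q B - Q (A+B) ≤ M := by
    intro A B h
    have h2 := hub A B (by omega) (by omega)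
    rwa [if_pos h] at h2
  have IB2 : ∀ A B, A ≤ N → B ≤ N → N ≤ A + B → Q A + Q B - 1 - Q (A+B-N) ≤ M := by
    intro A B hA hB h
    have h2 := hub A B hA hB
    rcases eq_or_lt_of_le h with h0 | h1
    · rw [if_pos (by omega), ← h0, hQN] at h2
      have e0 : A + B - N = 0 := by omega
      rw [e0, hQ0]
      linarith
    · rw [if_neg (by omega)] at h2
      linarith
  have Mle : M ≤ 0 := by
    by_contra hMpos
    push_neg at hMpos
    have hkey : ∀ U V, U ≤ N → V ≤ N → U ≤ V →
        Q U + Q V - (if U + V ≤ N then Q (U + V) else 1 + Q (U + V - N)) ≤ q * M := by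
      intro U V hU hV hUV
      by_cases hsum : U + V ≤ N
      · rw [if_pos hsum]
        by_cases h1 : 2*(U+V) ≤ N
        · -- A1 : everything in the lower half
          rw [Hlow U (by omega), Hlow V (by omega), Hlow (U+V) (by omega)]
          have hI := IB1 (2*U) (2*V) (by omega)
          have e : 2*U + 2*V = 2*(U+V) := by ring
          rw [e] at hI
          have h2 := mul_le_mul_of_nonneg_left hI hp0.le
          have h3 : p * M ≤ q * M := mul_le_mul_of_nonneg_right hpq hMpos.le
          linarith
        · by_cases h2 : N ≤ 2*V
          · -- A2
            rw [Hlow U (by omega), Hhigh V (by omega) hV, Hhigh (U+V) (by omega) hsum]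
            have hI := IB1 (2*U) (2*V - N) (by omega)
            have e : 2*U + (2*V - N) = 2*(U+V) - N := by omega
            rw [e] at hI
            have h3 := mul_le_mul_of_nonneg_left hI hq0.le
            have h4 : 0 ≤ (q - p) * Q (2*U) := mul_nonneg (by linarith) (Qnn _ (by omega))
            linarith
          · -- A3
            rw [Hlow U (by omega), Hlow V (by omega), Hhigh (U+V) (by omega) hsum]
            have hI := IB2 (2*U) (2*V) (by omega) (by omega) (by omega)
            have e : 2*U + 2*V - N = 2*(U+V) - N := by omega
            rw [e] at hI
            have h3 := mul_le_mul_of_nonneg_left hI hp0.le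
            have h4 : p * M ≤ q * M := mul_le_mul_of_nonneg_right hpq hMpos.le
            have h5 : 0 ≤ (q - p) * Q (2*(U+V) - N) := mul_nonneg (by linarith) (Qnn _ (by omega))
            linarith
      · rw [if_neg hsum]
        push_neg at hsum
        have hV2 : N < 2*V := by omega
        by_cases hT2 : 2*U ≤ N
        · -- T2
          rw [Hlow U hT2, Hhigh V (by omega) hV, Hlow (U+V-N) (by omega)]
          have hI := IB2 (2*U) (2*V - N) (by omega) (by omega) (by omega)
          have e : 2*U + (2*V - N) - N = 2*(U+V-N) := by omega
          rw [e] at hI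
          have h3 := mul_le_mul_of_nonneg_left hI hp0.le
          have h4 : p * M ≤ q * M := mul_le_mul_of_nonneg_right hpq hMpos.le
          have h5 : 0 ≤ (q - p) * (1 - Q (2*V - N)) :=
            mul_nonneg (by linarith) (by linarith [Qle1 (2*V-N) (by omega)])
          linarith
        · push_neg at hT2
          by_cases hT1a : N ≤ 2*(U+V-N)
          · -- T1a
            rw [Hhigh U (by omega) hU, Hhigh V (by omega) hV,
              Hhigh (U+V-N) (by omega) (by omega)]
            have hI := IB2 (2*U - N) (2*V - N) (by omega) (by omega) (by omega)
            have e : (2*U - N) + (2*V - N) - N = 2*(U+V-N) - N := by omega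
            rw [e] at hI
            have h3 := mul_le_mul_of_nonneg_left hI hq0.le
            linarith
          · -- T1b
            rw [Hhigh U (by omega) hU, Hhigh V (by omega) hV, Hlow (U+V-N) (by omega)]
            have hI := IB1 (2*U - N) (2*V - N) (by omega)
            have e : (2*U - N) + (2*V - N) = 2*(U+V-N) := by omega
            rw [e] at hI
            have h3 := mul_le_mul_of_nonneg_left hI hq0.le
            have h5 : 0 ≤ (q - p) * (1 - Q (2*(U+V-N))) :=
              mul_nonneg (by linarith) (by linarith [Qle1 (2*(U+V-N)) (by omega)])
            linarith
    obtain ⟨z, hz, hzM0⟩ := Finset.exists_mem_eq_sup' hne2 (fun z : ℕ × ℕ =>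
      Q z.1 + Q z.2 - (if z.1 + z.2 ≤ N then Q (z.1 + z.2) else 1 + Q (z.1 + z.2 - N)))
    have hzM : M = Q z.1 + Q z.2 -
        (if z.1 + z.2 ≤ N then Q (z.1 + z.2) else 1 + Q (z.1 + z.2 - N)) := by
      rw [hMdef]; exact hzM0
    have hz1 : z.1 ≤ N := by
      simp [Finset.mem_product] at hz; omega
    have hz2 : z.2 ≤ N := by
      simp [Finset.mem_product] at hz; omega
    have hMq : M ≤ q * M := by
      rcases le_total z.1 z.2 with hle | hle
      · have h6 := hkey z.1 z.2 hz1 hz2 hle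
        linarith
      · have h6 := hkey z.2 z.1 hz2 hz1 hle
        have e : z.2 + z.1 = z.1 + z.2 := by ring
        rw [e] at h6
        linarith
    have hid : p * M = M - q * M := by rw [show p = 1 - q by linarith]; ring
    have := mul_pos hp0 hMpos
    linarith
  have SAle : ∀ A B, A + B ≤ N → Q A + Q B ≤ Q (A+B) := by
    intro A B h
    linarith [IB1 A B h]
  have SMle : ∀ A B, A ≤ N → B ≤ N → N ≤ A + B → Q A + Q B ≤ 1 + Q (A+B-N) := by
    intro A B hA hB h
    linarith [IB2 A B hA hB h]
  -- superharmonicity of Q with respect to arbitrary admissible stakes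
  set M2 := ((Finset.range (N+1)) ×ˢ (Finset.range (N+1))).sup' hne2
      (fun z : ℕ × ℕ => if z.2 ≤ z.1 ∧ z.1 + z.2 ≤ N then
        q * Q (z.1 - z.2) + p * Q (z.1 + z.2) - Q z.1 else 0) with hM2def
  have hub2 : ∀ b t, t ≤ b → b + t ≤ N →
      q * Q (b - t) + p * Q (b + t) - Q b ≤ M2 := by
    intro b t h1 h2
    have hmem : (b, t) ∈ (Finset.range (N+1)) ×ˢ (Finset.range (N+1)) := by
      simp [Finset.mem_product]; omega
    have h3 := Finset.le_sup' (fun z : ℕ × ℕ => if z.2 ≤ z.1 ∧ z.1 + z.2 ≤ N then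
        q * Q (z.1 - z.2) + p * Q (z.1 + z.2) - Q z.1 else 0) hmem
    rw [← hM2def] at h3
    simpa [h1, h2] using h3
  have M2le : M2 ≤ 0 := by
    by_contra hMpos
    push_neg at hMpos
    obtain ⟨z, hz, hzM0⟩ := Finset.exists_mem_eq_sup' hne2
      (fun z : ℕ × ℕ => if z.2 ≤ z.1 ∧ z.1 + z.2 ≤ N then
        q * Q (z.1 - z.2) + p * Q (z.1 + z.2) - Q z.1 else 0)
    have hz1 : z.1 ≤ N := by simp [Finset.mem_product] at hz; omega
    have hzM : M2 = if z.2 ≤ z.1 ∧ z.1 + z.2 ≤ N then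
        q * Q (z.1 - z.2) + p * Q (z.1 + z.2) - Q z.1 else 0 := by
      rw [hM2def]; exact hzM0
    by_cases hc : z.2 ≤ z.1 ∧ z.1 + z.2 ≤ N
    · rw [if_pos hc] at hzM
      obtain ⟨hc1, hc2⟩ := hc
      rcases le_or_gt (2*(z.1+z.2)) N with hC1 | hC1
      · -- C1 : everything low
        rw [Hlow (z.1 - z.2) (by omega), Hlow (z.1 + z.2) (by omega),
          Hlow z.1 (by omega)] at hzM
        have hI := hub2 (2*z.1) (2*z.2) (by omega) (by omega)
        have e2 : 2*z.1 - 2*z.2 = 2*(z.1 - z.2) := by omega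
        have e3 : 2*z.1 + 2*z.2 = 2*(z.1 + z.2) := by omega
        rw [e2, e3] at hI
        have h4 := mul_le_mul_of_nonneg_left hI hp0.le
        have hid2 : q * M2 = M2 - p * M2 := by rw [hq]; ring
        have h5 := mul_pos hq0 hMpos
        linarith
      · rcases le_or_gt N (2*(z.1 - z.2)) with hC2 | hC2
        · -- C2 : everything high
          rw [Hhigh (z.1 - z.2) (by omega) (by omega),
            Hhigh (z.1 + z.2) (by omega) (by omega),
            Hhigh z.1 (by omega) (by omega)] at hzM
          have hI := hub2 (2*z.1 - N) (2*z.2) (by omega) (by omega)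
          have e2 : 2*z.1 - N - 2*z.2 = 2*(z.1 - z.2) - N := by omega
          have e3 : 2*z.1 - N + 2*z.2 = 2*(z.1 + z.2) - N := by omega
          rw [e2, e3] at hI
          have h4 := mul_le_mul_of_nonneg_left hI hq0.le
          have hid2 : p * M2 = M2 - q * M2 := by
            rw [show p = 1 - q by linarith]; ring
          have h5 := mul_pos hp0 hMpos
          have hc0 : p * q + p * p = p := by rw [← mul_add, add_comm q p, hpq1, mul_one]
          linarith
        · rcases le_or_gt (2*z.1) N with hC3 | hC3
          · -- C3 : left pair low, right point high
            rw [Hlow (z.1 - z.2) (by omega),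
              Hhigh (z.1 + z.2) (by omega) (by omega), Hlow z.1 hC3] at hzM
            rw [Hhigh (2*z.1) (by omega) (by omega)] at hzM
            have hI := SAle (2*(z.1 - z.2)) (2*(z.1+z.2) - N) (by omega)
            have e : 2*(z.1 - z.2) + (2*(z.1+z.2) - N) = 2*(2*z.1) - N := by omega
            rw [e] at hI
            have h4 := mul_le_mul_of_nonneg_left hI (mul_pos hp0 hq0).le
            linarith
          · -- C4 : left point low, right pair high
            rw [Hlow (z.1 - z.2) (by omega),
              Hhigh (z.1 + z.2) (by omega) (by omega),
              Hhigh z.1 (by omega) hz1] at hzM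
            rw [Hlow (2*z.1 - N) (by omega)] at hzM
            have hI := SMle (2*(z.1 - z.2)) (2*(z.1+z.2) - N) (by omega) (by omega)
              (by omega)
            have e : 2*(z.1 - z.2) + (2*(z.1+z.2) - N) - N = 2*(2*z.1 - N) := by omega
            rw [e] at hI
            have h4 := mul_le_mul_of_nonneg_left hI (mul_pos hp0 hq0).le
            have hc0 : p * q + p * p = p := by rw [← mul_add, add_comm q p, hpq1, mul_one]
            linarith
    · rw [if_neg hc] at hzM; linarith
  have SH : ∀ b t, t ≤ b → b + t ≤ N → q * Q (b - t) + p * Q (b + t) ≤ Q b := by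
    intro b t h1 h2
    linarith [hub2 b t h1 h2]
  -- final comparison between L and Q
  have hne1 : (Finset.range (N+1)).Nonempty := ⟨0, by simp⟩
  set M3 := (Finset.range (N+1)).sup' hne1 (fun i => L i - Q i) with hM3def
  have hub3 : ∀ i, i ≤ N → L i - Q i ≤ M3 := by
    intro i hi
    have hmem : i ∈ Finset.range (N+1) := by simp; omega
    rw [hM3def]
    exact Finset.le_sup' (fun i => L i - Q i) hmem
  have hM3le : M3 ≤ 0 := by
    set A := (Finset.range (N+1)).filter (fun i => M3 ≤ L i - Q i) with hA
    have hAne : A.Nonempty := by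
      obtain ⟨i, hi, hie⟩ := Finset.exists_mem_eq_sup' hne1 (fun i => L i - Q i)
      have he : M3 = L i - Q i := by rw [hM3def]; exact hie
      exact ⟨i, by simp only [hA, Finset.mem_filter]; exact ⟨hi, he.le⟩⟩
    set i₀ := A.max' hAne with hi₀def
    have hi₀A : i₀ ∈ A := A.max'_mem hAne
    have hi₀N : i₀ ≤ N := by
      have := (Finset.mem_filter.mp hi₀A).1
      simp at this; omega
    have hi₀m : M3 ≤ L i₀ - Q i₀ := (Finset.mem_filter.mp hi₀A).2
    rcases Nat.eq_zero_or_pos i₀ with h0 | h1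
    · rw [h0, hL0, hQ0] at hi₀m; linarith
    · rcases eq_or_lt_of_le hi₀N with hN0 | hN1
      · rw [hN0, hLN, hQN] at hi₀m; linarith
      · exfalso
        obtain ⟨hs1, hs2⟩ := hS i₀ h1 (by omega)
        have hrec := hLrec i₀ h1 (by omega)
        have hsh := SH i₀ (S i₀) (by omega) (by omega)
        have hb1 : L (i₀ - S i₀) - Q (i₀ - S i₀) ≤ M3 := hub3 _ (by omega)
        have hb2 : L (i₀ + S i₀) - Q (i₀ + S i₀) ≤ M3 := hub3 _ (by omega)
        have hstep : M3 ≤ q * (L (i₀ - S i₀) - Q (i₀ - S i₀))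
            + p * (L (i₀ + S i₀) - Q (i₀ + S i₀)) := by
          rw [hrec] at hi₀m
          linarith [hsh, hi₀m]
        have hc2 : M3 ≤ L (i₀ + S i₀) - Q (i₀ + S i₀) := by
          have h4 : q * (L (i₀ - S i₀) - Q (i₀ - S i₀)) ≤ q * M3 :=
            mul_le_mul_of_nonneg_left hb1 hq0.le
          have h5 : p * M3 ≤ p * (L (i₀ + S i₀) - Q (i₀ + S i₀)) := by
            have hid3 : p * M3 = M3 - q * M3 := by rw [hq]; ring
            linarith
          exact le_of_mul_le_mul_left h5 hp0
        have hmem : i₀ + S i₀ ∈ A := by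
          simp only [hA, Finset.mem_filter, Finset.mem_range]
          exact ⟨by omega, hc2⟩
        have := A.le_max' _ hmem
        omega
  intro i hi
  linarith [hub3 i hi]
end

section
/- Fix an integer N ≥ 2, a real p with 0 < p < 1, q = 1 − p, a strategy S, and a real t with 0 ≤ t < 1. Then there exists exactly one function L : {0,…,N} → ℝ satisfying L(0) = 1, L(N) = 1, and L(i) = t·(q·L(i − S(i)) + p·L(i + S(i))) for all 1 ≤ i ≤ N − 1. -/
/-!
The system is the fixed-point equation of the map `L ↦ (1 at 0 and N, t·(q·L(i - S i) + p·L(i + S i))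
at interior i)` on functions `{0,…,N} → ℝ` with the sup metric. Its coefficient rows have absolute
sum `t·(q + p) = t < 1`, so the map is a contraction and Banach's fixed point theorem gives
existence and uniqueness at once.
-/

open Finset Function NNReal

section DirichletProblem

variable {ι : Type*} [Fintype ι]

theorem abs_sum_mul_sub_sum_mul_le (a x y : ι → ℝ) :
    |∑ j, a j * x j - ∑ j, a j * y j| ≤ (∑ j, |a j|) * dist x y := by
  rw [← sum_sub_distrib, sum_mul]
  refine (abs_sum_le_sum_abs _ _).trans (sum_le_sum fun j _ => ?_)
  rw [← mul_sub, abs_mul, ← Real.dist_eq]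
  exact mul_le_mul_of_nonneg_left (dist_le_pi_dist x y j) (abs_nonneg _)

variable (interior : ι → Prop) [DecidablePred interior] (A : ι → ι → ℝ) (g : ι → ℝ)

def dirichletStep (L : ι → ℝ) : ι → ℝ :=
  fun i => if interior i then ∑ j, A i j * L j else g i

variable {interior A}

theorem dirichletStep_lipschitzWith {K : ℝ≥0} (hA : ∀ i, interior i → ∑ j, |A i j| ≤ K) :
    LipschitzWith K (dirichletStep interior A g) := by
  refine LipschitzWith.of_dist_le_mul fun x y => (dist_pi_le_iff (by positivity)).2 fun i => ?_
  by_cases hi : interior i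
  · simp only [dirichletStep, if_pos hi, Real.dist_eq]
    exact (abs_sum_mul_sub_sum_mul_le _ _ _).trans
      (mul_le_mul_of_nonneg_right (hA i hi) dist_nonneg)
  · simp only [dirichletStep, if_neg hi, dist_self]
    positivity

theorem existsUnique_isFixedPt_dirichletStep {K : ℝ≥0} (hK : K < 1)
    (hA : ∀ i, interior i → ∑ j, |A i j| ≤ K) :
    ∃! L, IsFixedPt (dirichletStep interior A g) L :=
  have hF : ContractingWith K (dirichletStep interior A g) :=
    ⟨hK, dirichletStep_lipschitzWith g hA⟩
  ⟨_, hF.fixedPoint_isFixedPt, fun _ hL => hF.fixedPoint_unique hL⟩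

end DirichletProblem

section Gambling

variable (N : ℕ) (p q : ℝ) (S : ℕ → ℕ) (t : ℝ)

def IsDurationPGFSolution (L : ℕ → ℝ) : Prop :=
  L 0 = 1 ∧ L N = 1 ∧
    ∀ i : ℕ, 1 ≤ i → i ≤ N - 1 → L i = t * (q * L (i - S i) + p * L (i + S i))

def stakeTransition (i j : Fin (N + 1)) : ℝ :=
  t * ((if (j : ℕ) = i - S i then q else 0) + (if (j : ℕ) = i + S i then p else 0))

def durationStep : (Fin (N + 1) → ℝ) → Fin (N + 1) → ℝ :=
  dirichletStep (fun i => 1 ≤ (i : ℕ) ∧ (i : ℕ) ≤ N - 1) (stakeTransition N p q S t) 1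

theorem sum_fin_ite_val_eq_mul {m : ℕ} (hm : m ≤ N) (c : ℝ) (f : ℕ → ℝ) :
    ∑ j : Fin (N + 1), (if (j : ℕ) = m then c else 0) * f j = c * f m := by
  rw [Fin.sum_univ_eq_sum_range (fun j => (if j = m then c else 0) * f j)]
  simp [Nat.lt_succ_of_le hm]

variable {N S}

theorem sum_stakeTransition_mul {i : Fin (N + 1)} (hi : (i : ℕ) + S i ≤ N) (L : ℕ → ℝ) :
    ∑ j, stakeTransition N p q S t i j * L j = t * (q * L (i - S i) + p * L (i + S i)) := by
  simp only [stakeTransition, mul_assoc, ← mul_sum, add_mul, sum_add_distrib]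
  rw [sum_fin_ite_val_eq_mul N (by omega), sum_fin_ite_val_eq_mul N hi]

theorem sum_abs_stakeTransition {i : Fin (N + 1)} (hi : (i : ℕ) + S i ≤ N)
    (hp : 0 ≤ p) (hq : 0 ≤ q) (ht : 0 ≤ t) :
    ∑ j, |stakeTransition N p q S t i j| = t * (q + p) := by
  have hnonneg (j : Fin (N + 1)) : 0 ≤ stakeTransition N p q S t i j := by
    unfold stakeTransition
    positivity
  simpa only [abs_of_nonneg (hnonneg _), Pi.one_apply, mul_one] using
    sum_stakeTransition_mul p q t hi 1

theorem isFixedPt_durationStep_iff (hS : ∀ i, 1 ≤ i → i ≤ N - 1 → i + S i ≤ N) (L : ℕ → ℝ) :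
    IsFixedPt (durationStep N p q S t) (fun i => L i) ↔ IsDurationPGFSolution N p q S t L := by
  have step (i : Fin (N + 1)) : durationStep N p q S t (fun i => L i) i =
      if 1 ≤ (i : ℕ) ∧ (i : ℕ) ≤ N - 1 then t * (q * L (i - S i) + p * L (i + S i)) else 1 := by
    unfold durationStep dirichletStep
    split_ifs with hi
    · exact sum_stakeTransition_mul p q t (hS i hi.1 hi.2) L
    · rfl
  constructor
  · intro hL
    refine ⟨?_, ?_, fun i hi₁ hi₂ => ?_⟩
    · simpa [step] using (congrFun hL 0).symm
    · have hN : ¬(1 ≤ N ∧ N ≤ N - 1) := by omega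
      simpa [step, hN] using (congrFun hL (Fin.last N)).symm
    · simpa [step, hi₁, hi₂] using (congrFun hL ⟨i, by omega⟩).symm
  · rintro ⟨h₀, h_N, h_int⟩
    funext i
    rw [step]
    split_ifs with hi
    · exact (h_int i hi.1 hi.2).symm
    · obtain h | h : (i : ℕ) = 0 ∨ (i : ℕ) = N := by omega
      all_goals rw [h]; symm; assumption

end Gambling

theorem duration_pgf_system_exists_unique_general
    (N : ℕ) (p q : ℝ)
    (hp0 : 0 < p) (hp1 : p < 1) (hq : q = 1 - p)
    (S : ℕ → ℕ)
    (hS : ∀ i : ℕ, 1 ≤ i → i ≤ N - 1 → 1 ≤ S i ∧ S i ≤ min i (N - i))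
    (t : ℝ) (ht0 : 0 ≤ t) (ht1 : t < 1) :
    (∃ L : ℕ → ℝ, L 0 = 1 ∧ L N = 1 ∧
        ∀ i : ℕ, 1 ≤ i → i ≤ N - 1 →
          L i = t * (q * L (i - S i) + p * L (i + S i))) ∧
    (∀ L₁ L₂ : ℕ → ℝ,
        (L₁ 0 = 1 ∧ L₁ N = 1 ∧
          ∀ i : ℕ, 1 ≤ i → i ≤ N - 1 →
            L₁ i = t * (q * L₁ (i - S i) + p * L₁ (i + S i))) →
        (L₂ 0 = 1 ∧ L₂ N = 1 ∧
          ∀ i : ℕ, 1 ≤ i → i ≤ N - 1 →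
            L₂ i = t * (q * L₂ (i - S i) + p * L₂ (i + S i))) →
        ∀ i : ℕ, i ≤ N → L₁ i = L₂ i) := by
  change (∃ L, IsDurationPGFSolution N p q S t L) ∧ ∀ L₁ L₂, IsDurationPGFSolution N p q S t L₁ →
    IsDurationPGFSolution N p q S t L₂ → ∀ i ≤ N, L₁ i = L₂ i
  have hS' (i : ℕ) (hi₁ : 1 ≤ i) (hi₂ : i ≤ N - 1) : i + S i ≤ N := by
    have := (hS i hi₁ hi₂).2
    omega
  have hrow (i : Fin (N + 1)) (hi : 1 ≤ (i : ℕ) ∧ (i : ℕ) ≤ N - 1) :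
      ∑ j, |stakeTransition N p q S t i j| ≤ t.toNNReal := by
    rw [sum_abs_stakeTransition p q t (hS' i hi.1 hi.2) hp0.le (by linarith) ht0,
      Real.coe_toNNReal t ht0, hq]
    linarith
  obtain ⟨L, hL, huniq⟩ : ∃! L, IsFixedPt (durationStep N p q S t) L :=
    existsUnique_isFixedPt_dirichletStep 1 (Real.toNNReal_lt_one.2 ht1) hrow
  have hsolution (L' : ℕ → ℝ) (h : IsDurationPGFSolution N p q S t L') :
      (fun i : Fin (N + 1) => L' i) = L :=
    huniq _ ((isFixedPt_durationStep_iff p q t hS' L').2 h)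
  refine ⟨⟨_, (isFixedPt_durationStep_iff p q t hS' fun n => L (Fin.ofNat (N + 1) n)).1 ?_⟩,
    fun L₁ L₂ h₁ h₂ i hi => ?_⟩
  · simpa only [Fin.ofNat_val_eq_self] using hL
  · exact congrFun ((hsolution L₁ h₁).trans (hsolution L₂ h₂).symm) ⟨i, Nat.lt_succ_of_le hi⟩

/-- Existence and uniqueness of the solution of the probability-generating-
function system for the duration of the game under a stationary strategy `S`,
evaluated at `0 ≤ t < 1`: `L 0 = 1`, `L N = 1`, and
`L i = t·(q·L(i - S i) + p·L(i + S i))` for `1 ≤ i ≤ N - 1`. -/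
theorem duration_pgf_system_exists_unique
    (N : ℕ) (hN : 2 ≤ N) (p q : ℝ)
    (hp0 : 0 < p) (hp1 : p < 1) (hq : q = 1 - p)
    (S : ℕ → ℕ)
    (hS : ∀ i : ℕ, 1 ≤ i → i ≤ N - 1 → 1 ≤ S i ∧ S i ≤ min i (N - i))
    (t : ℝ) (ht0 : 0 ≤ t) (ht1 : t < 1) :
    (∃ L : ℕ → ℝ, L 0 = 1 ∧ L N = 1 ∧
        ∀ i : ℕ, 1 ≤ i → i ≤ N - 1 →
          L i = t * (q * L (i - S i) + p * L (i + S i))) ∧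
    (∀ L₁ L₂ : ℕ → ℝ,
        (L₁ 0 = 1 ∧ L₁ N = 1 ∧
          ∀ i : ℕ, 1 ≤ i → i ≤ N - 1 →
            L₁ i = t * (q * L₁ (i - S i) + p * L₁ (i + S i))) →
        (L₂ 0 = 1 ∧ L₂ N = 1 ∧
          ∀ i : ℕ, 1 ≤ i → i ≤ N - 1 →
            L₂ i = t * (q * L₂ (i - S i) + p * L₂ (i + S i))) →
        ∀ i : ℕ, i ≤ N → L₁ i = L₂ i) :=
  duration_pgf_system_exists_unique_general N p q hp0 hp1 hq S hS t ht0 ht1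
end

section
/- Fix an integer N ≥ 2, a real p with 0 < p < 1, q = 1 − p, and a strategy S. If L : {0,…,N} → ℝ satisfies L(0) = 1, L(N) = 1, and L(i) = q·L(i − S(i)) + p·L(i + S(i)) for all 1 ≤ i ≤ N − 1, then L(i) = 1 for every 0 ≤ i ≤ N. -/
/-!
Maximum principle: at an interior maximiser `i` of `L` on `{0,…,N}`, the value `L i` is a
weighted average with positive weight `q` on `L (i - S i)`, so `i - S i` is a strictly smaller
maximiser. Descending, some maximiser is the boundary point `0` or `N`, where `L = 1`; hence
`L ≤ 1`, and the same argument for `-L` gives `L ≥ 1`.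
-/

open Set

lemma eq_of_eq_mul_add_mul_of_le {p q a b x : ℝ} (hq : 0 < q) (hp : 0 ≤ p) (hpq : q + p = 1)
    (hx : x = q * a + p * b) (ha : a ≤ x) (hb : b ≤ x) : a = x := by
  refine le_antisymm ha (le_of_mul_le_mul_left ?_ hq)
  calc q * x = x - p * x := by linear_combination x * hpq
    _ ≤ x - p * b := by gcongr
    _ = q * a := by rw [hx]; ring

section MaximumPrinciple

variable {N : ℕ} {p q : ℝ} {S : ℕ → ℕ} {L : ℕ → ℝ}

lemma isMaxOn_sub_of_isMaxOn (hq : 0 < q) (hp : 0 ≤ p) (hpq : q + p = 1)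
    (hS : ∀ i : ℕ, 1 ≤ i → i ≤ N - 1 → 1 ≤ S i ∧ S i ≤ min i (N - i))
    (hrec : ∀ i : ℕ, 1 ≤ i → i ≤ N - 1 → L i = q * L (i - S i) + p * L (i + S i))
    {i : ℕ} (h1i : 1 ≤ i) (hiN : i ≤ N - 1) (hmax : IsMaxOn L (Iic N) i) :
    IsMaxOn L (Iic N) (i - S i) := by
  obtain ⟨-, hSi⟩ := hS i h1i hiN
  have hSi' := le_min_iff.mp hSi
  have hdown : L (i - S i) = L i :=
    eq_of_eq_mul_add_mul_of_le hq hp hpq (hrec i h1i hiN)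
      (hmax (show i - S i ≤ N by omega)) (hmax (show i + S i ≤ N by omega))
  exact isMaxOn_iff.mpr fun j hj ↦ hdown ▸ isMaxOn_iff.mp hmax j hj

lemma le_of_isMaxOn (hq : 0 < q) (hp : 0 ≤ p) (hpq : q + p = 1)
    (hS : ∀ i : ℕ, 1 ≤ i → i ≤ N - 1 → 1 ≤ S i ∧ S i ≤ min i (N - i))
    (hrec : ∀ i : ℕ, 1 ≤ i → i ≤ N - 1 → L i = q * L (i - S i) + p * L (i + S i))
    {c : ℝ} (h0 : L 0 ≤ c) (hN : L N ≤ c) (i : ℕ) (hiN : i ≤ N)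
    (hmax : IsMaxOn L (Iic N) i) : L i ≤ c := by
  induction i using Nat.strong_induction_on with
  | _ i ih =>
    rcases Nat.eq_zero_or_pos i with rfl | h1i
    · exact h0
    rcases eq_or_lt_of_le hiN with rfl | hiN'
    · exact hN
    have hSi := (hS i h1i (by omega)).1
    have hmax' := isMaxOn_sub_of_isMaxOn hq hp hpq hS hrec h1i (by omega) hmax
    exact (isMaxOn_iff.mp hmax' i hiN).trans (ih (i - S i) (by omega) (by omega) hmax')

lemma le_of_forall_eq_mul_add_mul (hq : 0 < q) (hp : 0 ≤ p) (hpq : q + p = 1)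
    (hS : ∀ i : ℕ, 1 ≤ i → i ≤ N - 1 → 1 ≤ S i ∧ S i ≤ min i (N - i))
    (hrec : ∀ i : ℕ, 1 ≤ i → i ≤ N - 1 → L i = q * L (i - S i) + p * L (i + S i))
    {c : ℝ} (h0 : L 0 ≤ c) (hN : L N ≤ c) : ∀ i : ℕ, i ≤ N → L i ≤ c := by
  obtain ⟨m, hmN, hmax⟩ := exists_max_image (Iic N) L (finite_Iic N) ⟨0, Nat.zero_le N⟩
  exact fun i hi ↦ (hmax i hi).trans (le_of_isMaxOn hq hp hpq hS hrec h0 hN m hmN hmax)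

end MaximumPrinciple

theorem duration_pgf_at_one_is_one_general
    (N : ℕ) (p q : ℝ)
    (hp0 : 0 < p) (hp1 : p < 1) (hq : q = 1 - p)
    (S : ℕ → ℕ)
    (hS : ∀ i : ℕ, 1 ≤ i → i ≤ N - 1 → 1 ≤ S i ∧ S i ≤ min i (N - i))
    (L : ℕ → ℝ) (h0 : L 0 = 1) (hNval : L N = 1)
    (hrec : ∀ i : ℕ, 1 ≤ i → i ≤ N - 1 →
      L i = q * L (i - S i) + p * L (i + S i)) :
    ∀ i : ℕ, i ≤ N → L i = 1 := by
  have hq0 : 0 < q := by linarith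
  have hpq : q + p = 1 := by linarith
  have hle := le_of_forall_eq_mul_add_mul hq0 hp0.le hpq hS hrec h0.le hNval.le
  have hge := le_of_forall_eq_mul_add_mul (L := fun i ↦ -L i) hq0 hp0.le hpq hS
    (fun i h1 h2 ↦ by rw [hrec i h1 h2]; ring) (neg_le_neg h0.ge) (neg_le_neg hNval.ge)
  exact fun i hi ↦ le_antisymm (hle i hi) (neg_le_neg_iff.mp (hge i hi))

/-- Evaluation at `t = 1` of the duration-PGF system: any solution of
`L 0 = 1`, `L N = 1`, `L i = q·L(i - S i) + p·L(i + S i)` for `1 ≤ i ≤ N - 1`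
is identically `1` on `{0,…,N}` — i.e. under any stationary strategy the game
ends with probability one. -/
theorem duration_pgf_at_one_is_one
    (N : ℕ) (hN : 2 ≤ N) (p q : ℝ)
    (hp0 : 0 < p) (hp1 : p < 1) (hq : q = 1 - p)
    (S : ℕ → ℕ)
    (hS : ∀ i : ℕ, 1 ≤ i → i ≤ N - 1 → 1 ≤ S i ∧ S i ≤ min i (N - i))
    (L : ℕ → ℝ) (h0 : L 0 = 1) (hNval : L N = 1)
    (hrec : ∀ i : ℕ, 1 ≤ i → i ≤ N - 1 →
      L i = q * L (i - S i) + p * L (i + S i)) :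
    ∀ i : ℕ, i ≤ N → L i = 1 :=
  duration_pgf_at_one_is_one_general N p q hp0 hp1 hq S hS L h0 hNval hrec
end
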